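/- With the same setting as the STORM recursion, if additionally h(e) ∈ Ω for a closed convex set Ω and ĥ_{t+1} = Π_Ω[(1-β_t)(ĥ_t - h(e_{t-1};ξ_t)) + h(e_t;ξ_t)], then the same bound holds: E_t[‖ĥ_{t+1} - h(e_t)‖²] ≤ (1-β_t)‖ĥ_t - h(e_{t-1})‖² + 2β_t²σ² + 2L²‖e_t - e_{t-1}‖². -/

import Mathlib

/-!
Centre the stochastic terms: with `K e := H e - h e`, the unprojected update minus `h e₁` is
`(1 - β) • (hhat - h e₀) + Z` where `Z = β • K e₁ + (1 - β) • (K e₁ - K e₀)` has mean zero, so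
the cross term vanishes in expectation and `(1 - β)² ≤ 1 - β` handles the deterministic part.
Pointwise `‖Z‖² ≤ 2β²‖K e₁‖² + 2‖K e₁ - K e₀‖²`; the first term is the variance of `H e₁`, the
second is the variance of `H e₁ - H e₀`, hence at most its second moment `≤ L²‖e₁ - e₀‖²`.
Finally, projecting onto the convex set `S` can only decrease the distance to `h e₁ ∈ S`.
-/

open MeasureTheory

local notation "⟪" x ", " y "⟫" => @inner ℝ _ _ x y

theorem Convex.norm_sub_le_of_isNearest {F : Type*} [NormedAddCommGroup F]
    [InnerProductSpace ℝ F] {S : Set F} (hS : Convex ℝ S) {a p c : F}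
    (hp : p ∈ S) (hnear : ∀ b ∈ S, ‖a - p‖ ≤ ‖a - b‖) (hc : c ∈ S) :
    ‖p - c‖ ≤ ‖a - c‖ := by
  have : Nonempty S := ⟨⟨p, hp⟩⟩
  have hinf : ‖a - p‖ = ⨅ b : S, ‖a - b‖ :=
    le_antisymm (le_ciInf fun b => hnear b b.2)
      (ciInf_le (f := fun b : S => ‖a - b‖) ⟨0, Set.forall_mem_range.2 fun _ => norm_nonneg _⟩
        ⟨p, hp⟩)
  have hobtuse : ⟪a - p, c - p⟫ ≤ 0 :=
    (norm_eq_iInf_iff_real_inner_le_zero hS hp).mp hinf c hc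
  have hexpand := norm_sub_sq_real (a - p) (c - p)
  rw [sub_sub_sub_cancel_right, ← norm_neg (c - p), neg_sub] at hexpand
  refine (pow_le_pow_iff_left₀ (norm_nonneg _) (norm_nonneg _) two_ne_zero).mp ?_
  nlinarith [sq_nonneg ‖a - p‖]

theorem norm_smul_add_one_sub_smul_sq_le {F : Type*} [NormedAddCommGroup F] [NormedSpace ℝ F]
    {β : ℝ} (hβ0 : 0 ≤ β) (hβ1 : β ≤ 1) (x y : F) :
    ‖β • x + (1 - β) • y‖ ^ 2 ≤ 2 * β ^ 2 * ‖x‖ ^ 2 + 2 * ‖y‖ ^ 2 := by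
  have hy : ‖(1 - β) • y‖ ≤ ‖y‖ := by
    rw [norm_smul, Real.norm_of_nonneg (by linarith)]
    exact mul_le_of_le_one_left (norm_nonneg _) (by linarith)
  calc ‖β • x + (1 - β) • y‖ ^ 2 ≤ (β * ‖x‖ + ‖y‖) ^ 2 := by
        gcongr
        calc _ ≤ ‖β • x‖ + ‖(1 - β) • y‖ := norm_add_le _ _
          _ ≤ β * ‖x‖ + ‖y‖ := by rw [norm_smul, Real.norm_of_nonneg hβ0]; gcongr
    _ ≤ 2 * ((β * ‖x‖) ^ 2 + ‖y‖ ^ 2) := add_sq_le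
    _ = 2 * β ^ 2 * ‖x‖ ^ 2 + 2 * ‖y‖ ^ 2 := by ring

theorem integral_norm_smul_add_one_sub_smul_sq_le {F W : Type*} [NormedAddCommGroup F]
    [NormedSpace ℝ F] [MeasurableSpace W] {μ : Measure W} {β : ℝ} (hβ0 : 0 ≤ β) (hβ1 : β ≤ 1)
    {X Y : W → F} (hX : MemLp X 2 μ) (hY : MemLp Y 2 μ) :
    ∫ ω, ‖β • X ω + (1 - β) • Y ω‖ ^ 2 ∂μ
      ≤ 2 * β ^ 2 * ∫ ω, ‖X ω‖ ^ 2 ∂μ + 2 * ∫ ω, ‖Y ω‖ ^ 2 ∂μ := by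
  have hX2 : Integrable (fun ω => 2 * β ^ 2 * ‖X ω‖ ^ 2) μ :=
    (hX.integrable_norm_pow two_ne_zero).const_mul _
  have hY2 : Integrable (fun ω => 2 * ‖Y ω‖ ^ 2) μ :=
    (hY.integrable_norm_pow two_ne_zero).const_mul _
  rw [← integral_const_mul, ← integral_const_mul, ← integral_add hX2 hY2]
  exact integral_mono_of_nonneg (.of_forall fun _ => by positivity) (hX2.add hY2)
    (.of_forall fun _ => norm_smul_add_one_sub_smul_sq_le hβ0 hβ1 _ _)

theorem integral_sq_le_of_norm_le {F W : Type*} [NormedAddCommGroup F] [MeasurableSpace W]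
    {μ : Measure W} [IsProbabilityMeasure μ] {X : W → F} {C : ℝ} (hX : ∀ ω, ‖X ω‖ ≤ C) :
    ∫ ω, ‖X ω‖ ^ 2 ∂μ ≤ C ^ 2 :=
  calc ∫ ω, ‖X ω‖ ^ 2 ∂μ ≤ ∫ _, C ^ 2 ∂μ :=
        integral_mono_of_nonneg (.of_forall fun _ => by positivity) (integrable_const _)
          (.of_forall fun ω => pow_le_pow_left₀ (norm_nonneg _) (hX ω) 2)
    _ = C ^ 2 := by rw [integral_const, probReal_univ, one_smul]

section SecondMoment

variable {F W : Type*} [NormedAddCommGroup F] [InnerProductSpace ℝ F] [CompleteSpace F]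
  [MeasurableSpace W] {μ : Measure W} [IsProbabilityMeasure μ]

theorem integral_norm_const_add_sq (y : F) {Z : W → F} (hZ : MemLp Z 2 μ) :
    ∫ ω, ‖y + Z ω‖ ^ 2 ∂μ = ‖y‖ ^ 2 + 2 * ⟪y, ∫ ω, Z ω ∂μ⟫ + ∫ ω, ‖Z ω‖ ^ 2 ∂μ := by
  have hZ1 : Integrable Z μ := hZ.integrable one_le_two
  have hinner : Integrable (fun ω => 2 * ⟪y, Z ω⟫) μ := (hZ1.const_inner y).const_mul 2
  have hlin : Integrable (fun ω => ‖y‖ ^ 2 + 2 * ⟪y, Z ω⟫) μ := (integrable_const _).add hinner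
  have hsq : Integrable (fun ω => ‖Z ω‖ ^ 2) μ := hZ.integrable_norm_pow two_ne_zero
  simp_rw [norm_add_sq_real y]
  rw [integral_add hlin hsq,
    integral_add (integrable_const _) hinner, integral_const, integral_const_mul,
    integral_inner hZ1, probReal_univ, one_smul]

theorem integral_norm_const_add_sq_of_integral_eq_zero (y : F) {Z : W → F} (hZ : MemLp Z 2 μ)
    (hZ0 : ∫ ω, Z ω ∂μ = 0) :
    ∫ ω, ‖y + Z ω‖ ^ 2 ∂μ = ‖y‖ ^ 2 + ∫ ω, ‖Z ω‖ ^ 2 ∂μ := by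
  rw [integral_norm_const_add_sq y hZ, hZ0, inner_zero_right, mul_zero, add_zero]

theorem integral_norm_sub_integral_sq_le {X : W → F} (hX : MemLp X 2 μ) :
    ∫ ω, ‖X ω - ∫ ω', X ω' ∂μ‖ ^ 2 ∂μ ≤ ∫ ω, ‖X ω‖ ^ 2 ∂μ := by
  simp_rw [sub_eq_neg_add _ (∫ ω', X ω' ∂μ)]
  rw [integral_norm_const_add_sq _ hX, inner_neg_left, real_inner_self_eq_norm_sq, norm_neg]
  nlinarith [sq_nonneg ‖∫ ω', X ω' ∂μ‖]

theorem integral_norm_centered_sub_sq_le {X Y : W → F} (hX : MemLp X 2 μ) (hY : MemLp Y 2 μ)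
    {C : ℝ} (hXY : ∀ ω, ‖X ω - Y ω‖ ≤ C) :
    ∫ ω, ‖(X ω - ∫ ω', X ω' ∂μ) - (Y ω - ∫ ω', Y ω' ∂μ)‖ ^ 2 ∂μ ≤ C ^ 2 :=
  calc ∫ ω, ‖(X ω - ∫ ω', X ω' ∂μ) - (Y ω - ∫ ω', Y ω' ∂μ)‖ ^ 2 ∂μ
      = ∫ ω, ‖(X ω - Y ω) - ∫ ω', (X ω' - Y ω') ∂μ‖ ^ 2 ∂μ := by
        rw [integral_sub (hX.integrable one_le_two) (hY.integrable one_le_two)]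
        simp only [sub_sub_sub_comm]
    _ ≤ ∫ ω, ‖X ω - Y ω‖ ^ 2 ∂μ := integral_norm_sub_integral_sq_le (hX.sub hY)
    _ ≤ C ^ 2 := integral_sq_le_of_norm_le hXY

end SecondMoment

theorem integral_norm_storm_sub_sq_le {E F W : Type*} [NormedAddCommGroup E]
    [NormedAddCommGroup F] [InnerProductSpace ℝ F] [CompleteSpace F]
    [MeasurableSpace W] {μ : Measure W} [IsProbabilityMeasure μ]
    {h : E → F} {H : E → W → F} {L σ β : ℝ} (hβ0 : 0 ≤ β) (hβ1 : β ≤ 1)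
    (hmem : ∀ e, MemLp (H e) 2 μ) (hunbiased : ∀ e, ∫ ω, H e ω ∂μ = h e)
    (hvar : ∀ e, ∫ ω, ‖H e ω - h e‖ ^ 2 ∂μ ≤ σ ^ 2)
    (hlip : ∀ ω e e', ‖H e ω - H e' ω‖ ≤ L * ‖e - e'‖) (e₀ e₁ : E) (hhat : F) :
    ∫ ω, ‖(1 - β) • (hhat - H e₀ ω) + H e₁ ω - h e₁‖ ^ 2 ∂μ
      ≤ (1 - β) * ‖hhat - h e₀‖ ^ 2 + 2 * β ^ 2 * σ ^ 2 + 2 * L ^ 2 * ‖e₁ - e₀‖ ^ 2 := by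
  set K : E → W → F := fun e ω => H e ω - h e
  have hK : ∀ e, MemLp (K e) 2 μ := fun e => (hmem e).sub (memLp_const _)
  have hK0 : ∀ e, ∫ ω, K e ω ∂μ = 0 := fun e => by
    rw [integral_sub ((hmem e).integrable one_le_two) (integrable_const _), hunbiased,
      integral_const, probReal_univ, one_smul, sub_self]
  set Z : W → F := fun ω => β • K e₁ ω + (1 - β) • (K e₁ ω - K e₀ ω)
  have hZ : MemLp Z 2 μ := ((hK e₁).const_smul β).add (((hK e₁).sub (hK e₀)).const_smul _)
  have hZ0 : ∫ ω, Z ω ∂μ = 0 := by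
    have hK1 : ∀ e, Integrable (K e) μ := fun e => (hK e).integrable one_le_two
    have hnoise : Integrable (fun ω => β • K e₁ ω) μ := (hK1 e₁).smul β
    have hincr : Integrable (fun ω => (1 - β) • (K e₁ ω - K e₀ ω)) μ :=
      ((hK1 e₁).sub (hK1 e₀)).smul _
    rw [integral_add hnoise hincr, integral_smul, integral_smul,
      integral_sub (hK1 e₁) (hK1 e₀), hK0, hK0, sub_zero, smul_zero, smul_zero, add_zero]
  have hsplit : ∀ ω, (1 - β) • (hhat - H e₀ ω) + H e₁ ω - h e₁
      = (1 - β) • (hhat - h e₀) + Z ω := fun ω => by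
    simp only [Z, K, smul_sub, sub_smul, one_smul]
    abel
  have hincrement : ∫ ω, ‖K e₁ ω - K e₀ ω‖ ^ 2 ∂μ ≤ (L * ‖e₁ - e₀‖) ^ 2 := by
    simpa only [hunbiased] using
      integral_norm_centered_sub_sq_le (hmem e₁) (hmem e₀) fun ω => hlip ω e₁ e₀
  have hZsq : ∫ ω, ‖Z ω‖ ^ 2 ∂μ ≤ 2 * β ^ 2 * σ ^ 2 + 2 * L ^ 2 * ‖e₁ - e₀‖ ^ 2 :=
    calc ∫ ω, ‖Z ω‖ ^ 2 ∂μ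
        ≤ 2 * β ^ 2 * ∫ ω, ‖K e₁ ω‖ ^ 2 ∂μ + 2 * ∫ ω, ‖K e₁ ω - K e₀ ω‖ ^ 2 ∂μ :=
          integral_norm_smul_add_one_sub_smul_sq_le hβ0 hβ1 (hK e₁) ((hK e₁).sub (hK e₀))
      _ ≤ 2 * β ^ 2 * σ ^ 2 + 2 * (L * ‖e₁ - e₀‖) ^ 2 := by
          gcongr
          exact hvar e₁
      _ = 2 * β ^ 2 * σ ^ 2 + 2 * L ^ 2 * ‖e₁ - e₀‖ ^ 2 := by ring
  have hcarry : ‖(1 - β) • (hhat - h e₀)‖ ^ 2 ≤ (1 - β) * ‖hhat - h e₀‖ ^ 2 := by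
    rw [norm_smul, Real.norm_of_nonneg (by linarith), mul_pow]
    gcongr
    nlinarith
  simp_rw [hsplit]
  rw [integral_norm_const_add_sq_of_integral_eq_zero _ hZ hZ0]
  linarith

theorem stmt9_general {E F W : Type*} [NormedAddCommGroup E]
    [NormedAddCommGroup F] [InnerProductSpace ℝ F] [CompleteSpace F]
    [MeasurableSpace W] (μ : Measure W) [IsProbabilityMeasure μ]
    (h : E → F) (H : E → W → F) (L σ β : ℝ)
    (hβ0 : 0 ≤ β) (hβ1 : β ≤ 1)
    (hmem : ∀ e, MemLp (H e) 2 μ)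
    (hunbiased : ∀ e, ∫ ω, H e ω ∂μ = h e)
    (hvar : ∀ e, ∫ ω, ‖H e ω - h e‖ ^ 2 ∂μ ≤ σ ^ 2)
    (hlip : ∀ ω e e', ‖H e ω - H e' ω‖ ≤ L * ‖e - e'‖)
    (S : Set F) (hSconv : Convex ℝ S)
    (hhS : ∀ e, h e ∈ S)
    (P : F → F) (hP : ∀ a, P a ∈ S ∧ ∀ b ∈ S, ‖a - P a‖ ≤ ‖a - b‖)
    (e₀ e₁ : E) (hhat : F) :
    ∫ ω, ‖P ((1 - β) • (hhat - H e₀ ω) + H e₁ ω) - h e₁‖ ^ 2 ∂μ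
      ≤ (1 - β) * ‖hhat - h e₀‖ ^ 2 + 2 * β ^ 2 * σ ^ 2 + 2 * L ^ 2 * ‖e₁ - e₀‖ ^ 2 := by
  have hunprojected : Integrable
      (fun ω => ‖(1 - β) • (hhat - H e₀ ω) + H e₁ ω - h e₁‖ ^ 2) μ :=
    ((((memLp_const hhat).sub (hmem e₀)).const_smul (1 - β)).add (hmem e₁)).sub
      (memLp_const (h e₁)) |>.integrable_norm_pow two_ne_zero
  have hproj : ∀ a, ‖P a - h e₁‖ ^ 2 ≤ ‖a - h e₁‖ ^ 2 := fun a =>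
    pow_le_pow_left₀ (norm_nonneg _)
      (hSconv.norm_sub_le_of_isNearest (hP a).1 (hP a).2 (hhS e₁)) 2
  calc ∫ ω, ‖P ((1 - β) • (hhat - H e₀ ω) + H e₁ ω) - h e₁‖ ^ 2 ∂μ
      ≤ ∫ ω, ‖(1 - β) • (hhat - H e₀ ω) + H e₁ ω - h e₁‖ ^ 2 ∂μ :=
        integral_mono_of_nonneg (.of_forall fun _ => by positivity) hunprojected
          (.of_forall fun _ => hproj _)
    _ ≤ _ := integral_norm_storm_sub_sq_le hβ0 hβ1 hmem hunbiased hvar hlip e₀ e₁ hhat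

/-- Projected STORM variance-reduction recursion (one step): the same bound holds when the
estimator is projected onto a closed convex set `S` containing `h(e)` for every `e`. -/
theorem stmt9 {E F W : Type*} [NormedAddCommGroup E]
    [NormedAddCommGroup F] [InnerProductSpace ℝ F] [CompleteSpace F]
    [MeasurableSpace W] (μ : Measure W) [IsProbabilityMeasure μ]
    (h : E → F) (H : E → W → F) (L σ β : ℝ)
    (hβ0 : 0 ≤ β) (hβ1 : β ≤ 1)
    (hmem : ∀ e, MemLp (H e) 2 μ)
    (hunbiased : ∀ e, ∫ ω, H e ω ∂μ = h e)
    (hvar : ∀ e, ∫ ω, ‖H e ω - h e‖ ^ 2 ∂μ ≤ σ ^ 2)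
    (hlip : ∀ ω e e', ‖H e ω - H e' ω‖ ≤ L * ‖e - e'‖)
    (S : Set F) (hSne : S.Nonempty) (hSconv : Convex ℝ S) (hSclosed : IsClosed S)
    (hhS : ∀ e, h e ∈ S)
    (P : F → F) (hP : ∀ a, P a ∈ S ∧ ∀ b ∈ S, ‖a - P a‖ ≤ ‖a - b‖)
    (e₀ e₁ : E) (hhat : F) :
    ∫ ω, ‖P ((1 - β) • (hhat - H e₀ ω) + H e₁ ω) - h e₁‖ ^ 2 ∂μ
      ≤ (1 - β) * ‖hhat - h e₀‖ ^ 2 + 2 * β ^ 2 * σ ^ 2 + 2 * L ^ 2 * ‖e₁ - e₀‖ ^ 2 :=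
  stmt9_general μ h H L σ β hβ0 hβ1 hmem hunbiased hvar hlip S hSconv hhS P hP e₀ e₁ hhat
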